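/- arXiv:1903.01947 — 2 statements merged into one kernel-verified Lean document; each statement's English description precedes it below -/
import Mathlib

section
/- For any smooth simple closed curve γ ⊂ B²(1/√m), the image ψₘ(γ × S¹) ⊂ ℂ² is an embedded Lagrangian torus with respect to the standard symplectic form ω₀. -/
open Complex Real

/-- The standard symplectic form `ω₀` on `ℂ²`. -/
noncomputable def omega0 (u v : ℂ × ℂ) : ℝ :=
  ((starRingEnd ℂ) u.1 * v.1).im + ((starRingEnd ℂ) u.2 * v.2).im

/-- The probe parametrization `ψₘ(w, c) = (√(1 − m|w|²)·c, w·cᵐ)` in complex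
coordinates (`w` in the disc `B²(1/√m)`, `c ∈ S¹`). -/
noncomputable def probeMap (m : ℕ) (p : ℂ × ℂ) : ℂ × ℂ :=
  (((Real.sqrt (1 - m * ‖p.1‖ ^ 2) : ℝ) : ℂ) * p.2, p.1 * p.2 ^ m)

lemma hasFDerivAt_normSq (w : ℂ) : HasFDerivAt (fun z : ℂ => Complex.normSq z)
    ((2*w.re) • Complex.reCLM + (2*w.im) • Complex.imCLM) w := by
  have hr := Complex.reCLM.hasFDerivAt (x := w)
  have hi := Complex.imCLM.hasFDerivAt (x := w)
  have h := (hr.mul hr).add (hi.mul hi)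
  have h2 : HasFDerivAt (fun z : ℂ => z.re * z.re + z.im * z.im)
      ((2*w.re) • Complex.reCLM + (2*w.im) • Complex.imCLM) w := by
    refine h.congr_fderiv ?_
    ext a <;> simp [Complex.reCLM, Complex.imCLM] <;> ring
  exact h2.congr_of_eventuallyEq (by filter_upwards with z; simp [Complex.normSq_apply])

lemma probe_hasFDerivAt (m : ℕ) (hm : 1 ≤ m) (w c : ℂ)
    (hw : (m:ℝ) * Complex.normSq w < 1) :
    ∃ L : ℂ × ℂ →L[ℝ] ℂ × ℂ, HasFDerivAt (probeMap m) L (w, c) ∧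
      ∀ (a : ℂ) (s τ : ℝ), L (s • a, (τ:ℂ) * (I*c)) =
        ( (((s * (-((m:ℝ) * (w.re*a.re + w.im*a.im)) / Real.sqrt (1 - m * Complex.normSq w)) : ℝ) : ℂ)
            + ((τ * Real.sqrt (1 - m * Complex.normSq w) : ℝ) : ℂ) * I) * c,
          ((s:ℂ) * a + (τ:ℂ) * m * I * w) * c ^ m ) := by
  set f : ℝ := Real.sqrt (1 - m * Complex.normSq w) with hfdef
  have hpos : (0:ℝ) < 1 - m * Complex.normSq w := by linarith
  have hfpos : 0 < f := Real.sqrt_pos.mpr hpos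
  set Q : ℂ →L[ℝ] ℝ := (2*w.re) • Complex.reCLM + (2*w.im) • Complex.imCLM with hQ
  have hh : HasFDerivAt (fun z : ℂ => 1 - (m:ℝ) * Complex.normSq z) ((0:ℂ →L[ℝ] ℝ) - (m:ℝ) • Q) w :=
    (hasFDerivAt_const (1:ℝ) w).sub ((hasFDerivAt_normSq w).const_mul (m:ℝ))
  have hf : HasFDerivAt (fun z : ℂ => Real.sqrt (1 - m * Complex.normSq z))
      ((1/(2*f)) • ((0:ℂ →L[ℝ] ℝ) - (m:ℝ) • Q)) w :=
    (Real.hasDerivAt_sqrt hpos.ne').comp_hasFDerivAt w hh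
  have h1 := (hf.comp (w, c) (hasFDerivAt_fst (𝕜 := ℝ) (p := (w,c)))).smul (hasFDerivAt_snd (𝕜 := ℝ) (p := (w,c)))
  have hpow := ((hasDerivAt_pow m c).hasFDerivAt).restrictScalars ℝ
  have h2 := (hasFDerivAt_fst (𝕜 := ℝ) (p := (w,c))).mul (hpow.comp (w, c) hasFDerivAt_snd)
  have hL := h1.prodMk h2
  have hL' : HasFDerivAt (probeMap m) _ (w, c) := hL.congr_of_eventuallyEq (by
    filter_upwards with p
    simp [probeMap, Function.comp, Complex.real_smul, Complex.sq_norm])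
  refine ⟨_, hL', fun a s τ => ?_⟩
  ext
  · simp [Q, Complex.ext_iff, Complex.reCLM, Complex.imCLM]
    constructor <;> (field_simp; ring)
  · simp [Complex.ext_iff]
    have hc : c ^ (m-1) * c = c ^ m := by
      rw [← pow_succ, Nat.sub_add_cancel hm]
    rw [← hc]
    constructor <;> (simp [Complex.mul_re, Complex.mul_im]; ring)


/-- For any smooth simple closed curve `γ ⊂ B²(1/√m)`, the image `ψₘ(γ × S¹)` is an
embedded Lagrangian torus in `(ℂ², ω₀)`: `ψₘ` is injective on `γ × S¹`, and `ω₀`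
vanishes on any pair of tangent vectors to the image (the tangent space at
`ψₘ(γ(t), c)` being spanned by the images of `(γ'(t), 0)` and `(0, ic)`). -/
theorem probe_torus_lagrangian (m : ℕ) (hm : 1 ≤ m) (γ : ℝ → ℂ)
    (hγsmooth : ContDiff ℝ (⊤ : ℕ∞) γ)
    (hγper : Function.Periodic γ (2 * π))
    (hγsimple : Set.InjOn γ (Set.Ico 0 (2 * π)))
    (hγdisc : ∀ t, (m : ℝ) * ‖γ t‖ ^ 2 < 1) :
    Set.InjOn (probeMap m)
      {p : ℂ × ℂ | p.1 ∈ Set.range γ ∧ ‖p.2‖ = 1} ∧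
    (∀ (t : ℝ) (c : ℂ), ‖c‖ = 1 →
      ∀ s₁ s₂ t₁ t₂ : ℝ,
        omega0
          (fderiv ℝ (probeMap m) (γ t, c) (s₁ • deriv γ t, (t₁ : ℂ) * (I * c)))
          (fderiv ℝ (probeMap m) (γ t, c) (s₂ • deriv γ t, (t₂ : ℂ) * (I * c)))
          = 0) := by
  constructor
  · rintro p ⟨⟨tp, htp⟩, hp2⟩ q ⟨⟨tq, htq⟩, hq2⟩ heq
    have hp1 : (m:ℝ) * ‖p.1‖ ^ 2 < 1 := htp ▸ hγdisc tp
    have hq1 : (m:ℝ) * ‖q.1‖ ^ 2 < 1 := htq ▸ hγdisc tq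
    set fp : ℝ := Real.sqrt (1 - m * ‖p.1‖ ^ 2) with hfp
    set fq : ℝ := Real.sqrt (1 - m * ‖q.1‖ ^ 2) with hfq
    have hfppos : 0 < fp := Real.sqrt_pos.mpr (by linarith)
    have hfqpos : 0 < fq := Real.sqrt_pos.mpr (by linarith)
    have e1 : (fp : ℂ) * p.2 = (fq : ℂ) * q.2 := congrArg Prod.fst heq
    have e2 : p.1 * p.2 ^ m = q.1 * q.2 ^ m := congrArg Prod.snd heq
    have habs : fp = fq := by
      have := congrArg (‖·‖) e1
      simpa [norm_mul, hp2, hq2, Complex.norm_real, Real.norm_eq_abs, abs_of_pos hfppos, abs_of_pos hfqpos]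
        using this
    have h2eq : p.2 = q.2 := by
      rw [habs] at e1
      exact mul_left_cancel₀ (by exact_mod_cast hfqpos.ne') e1
    have h2ne : p.2 ≠ 0 := fun h => by simp [h] at hp2
    have h1eq : p.1 = q.1 := by
      rw [h2eq] at e2
      exact mul_right_cancel₀ (pow_ne_zero m (h2eq ▸ h2ne)) e2
    exact Prod.ext h1eq h2eq
  · intro t c hc s₁ s₂ t₁ t₂
    set w : ℂ := γ t with hwdef
    have hw : (m:ℝ) * Complex.normSq w < 1 := by
      rw [← Complex.sq_norm]; exact hγdisc t
    obtain ⟨L, hL, hev⟩ := probe_hasFDerivAt m hm w c hw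
    rw [hL.fderiv, hev (deriv γ t) s₁ t₁, hev (deriv γ t) s₂ t₂]
    set f : ℝ := Real.sqrt (1 - m * Complex.normSq w) with hfdef
    have hpos : (0:ℝ) < 1 - m * Complex.normSq w := by linarith
    have hfpos : 0 < f := Real.sqrt_pos.mpr hpos
    have hf2 : f ^ 2 = 1 - m * Complex.normSq w := Real.sq_sqrt hpos.le
    have hcc : (starRingEnd ℂ) c * c = 1 := by
      rw [mul_comm, Complex.mul_conj, Complex.normSq_eq_norm_sq, hc]; norm_num
    have hccm : (starRingEnd ℂ) (c ^ m) * c ^ m = 1 := by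
      rw [map_pow, ← mul_pow, hcc, one_pow]
    set a : ℂ := deriv γ t
    have e : ∀ x₁ x₂ y₁ y₂ : ℂ, omega0 (x₁*c, y₁*c^m) (x₂*c, y₂*c^m)
        = ((starRingEnd ℂ) x₁ * x₂).im + ((starRingEnd ℂ) y₁ * y₂).im := by
      intro x₁ x₂ y₁ y₂
      simp only [omega0, map_mul, mul_mul_mul_comm, hcc, hccm, mul_one]
    rw [e]
    have hfne : f ≠ 0 := hfpos.ne'
    simp only [map_add, map_mul, Complex.add_im, Complex.mul_im, Complex.mul_re,
      Complex.add_re, Complex.conj_re, Complex.conj_im, Complex.ofReal_re, Complex.ofReal_im,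
      Complex.I_re, Complex.I_im, Complex.natCast_re, Complex.natCast_im]
    field_simp
    ring
end

section
/- The characteristic distribution of the hypersurface-with-boundary P₂ = ψ₂(B²(1/√2) × S¹) ⊂ (ℂ², ω₀) is spanned by the vector field ∂φ (the tangent to the S¹-factor): ω₀(∂φ, v) = 0 for all v tangent to P₂, and any tangent vector w to P₂ with ω₀(w, v) = 0 for all v ∈ TP₂ is a multiple of ∂φ. -/
/-!
Write `s = √(1 - 2‖w‖²)`. The differential of `ψ₂` at `(w, c)` is
`dψ₂(v, u) = (-2⟪w, v⟫ c / s + s u, c² v + 2 w c u)`, and `∂φ = dψ₂(0, i c)`.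
When `‖c‖ = 1`, a direct computation gives `ω₀(∂φ, dψ₂(v, t i c)) = 0` and
`ω₀(dψ₂(u, t i c), dψ₂(i u, 0)) = ‖u‖²`. So a tangent vector `dψ₂(u, t i c)` that is
`ω₀`-orthogonal to `TP₂` has `u = 0`, and is then `t ∂φ` by linearity of `dψ₂`.
-/

open Complex Real

/-- The probe parametrization `ψ₂(w, c) = (√(1 − 2|w|²)·c, w·c²)`, whose image is
the hypersurface-with-boundary `P₂ ⊂ (ℂ², ω₀)`. -/
noncomputable def probeMap2 (p : ℂ × ℂ) : ℂ × ℂ :=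
  (((Real.sqrt (1 - 2 * ‖p.1‖ ^ 2) : ℝ) : ℂ) * p.2, p.1 * p.2 ^ 2)

open scoped InnerProductSpace

theorem Complex.sq_norm_eq_re_sq_add_im_sq (z : ℂ) : ‖z‖ ^ 2 = z.re ^ 2 + z.im ^ 2 := by
  rw [Complex.sq_norm, normSq_apply]
  ring

theorem fderiv_probeMap2_apply {w : ℂ} (hw : 2 * ‖w‖ ^ 2 < 1) (c v u : ℂ) :
    fderiv ℝ probeMap2 (w, c) (v, u) =
      ((-2 * ⟪w, v⟫_ℝ / √(1 - 2 * ‖w‖ ^ 2) : ℝ) * c + (√(1 - 2 * ‖w‖ ^ 2) : ℝ) * u,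
        v * c ^ 2 + 2 * w * c * u) := by
  have hfst : HasFDerivAt (𝕜 := ℝ) (fun p : ℂ × ℂ => p.1) _ (w, c) := hasFDerivAt_fst
  have hsnd : HasFDerivAt (𝕜 := ℝ) (fun p : ℂ × ℂ => p.2) _ (w, c) := hasFDerivAt_snd
  have hroot : HasFDerivAt (fun p : ℂ × ℂ => √(1 - 2 * ‖p.1‖ ^ 2)) _ (w, c) :=
    ((hfst.norm_sq.const_mul 2).const_sub 1).sqrt (by simp; linarith)
  have h : HasFDerivAt probeMap2 _ (w, c) :=
    ((ofRealCLM.hasFDerivAt.comp (w, c) hroot).fun_mul hsnd).prodMk (hfst.fun_mul (hsnd.pow 2))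
  have hs : (√(1 - 2 * ‖w‖ ^ 2) : ℂ) ≠ 0 :=
    ofReal_ne_zero.2 (Real.sqrt_ne_zero'.2 (by linarith))
  rw [h.fderiv]
  simp only [Function.comp_apply, ofRealCLM_apply, one_div, mul_inv_rev, smul_neg,
    ContinuousLinearMap.comp_neg, ContinuousLinearMap.comp_smulₛₗ, ringHom_apply,
    ContinuousLinearMap.comp_smul, Nat.add_one_sub_one, pow_one, nsmul_eq_mul, Nat.cast_ofNat,
    ContinuousLinearMap.prod_apply, add_apply, smul_apply, ContinuousLinearMap.coe_snd',
    smul_eq_mul, neg_apply, ContinuousLinearMap.comp_apply, ContinuousLinearMap.coe_fst',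
    coe_innerSL_apply, real_smul, ofReal_mul, ofReal_ofNat, ofReal_inv, ofReal_div, ofReal_neg,
    Prod.mk.injEq]
  constructor
  · field_simp
    ring
  · ring

theorem omega0_fderiv_probeMap2_zero_I_mul_eq_zero {w c : ℂ} (hw : 2 * ‖w‖ ^ 2 < 1)
    (hc : ‖c‖ = 1) (v : ℂ) (t : ℝ) :
    omega0 (fderiv ℝ probeMap2 (w, c) (0, I * c))
      (fderiv ℝ probeMap2 (w, c) (v, t * (I * c))) = 0 := by
  have hc2 : c.re ^ 2 + c.im ^ 2 = 1 := by rw [← sq_norm_eq_re_sq_add_im_sq, hc, one_pow]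
  rw [fderiv_probeMap2_apply hw, fderiv_probeMap2_apply hw]
  have hs : √(1 - 2 * ‖w‖ ^ 2) ≠ 0 := Real.sqrt_ne_zero'.2 (by linarith)
  generalize √(1 - 2 * ‖w‖ ^ 2) = s at hs ⊢
  simp only [omega0, inner_zero_right, mul_zero, zero_div, ofReal_zero, zero_mul, zero_add,
    map_mul, conj_ofReal, conj_I, neg_mul, mul_neg, Complex.inner, mul_re, conj_re, conj_im,
    sub_neg_eq_add, ofReal_div, ofReal_neg, ofReal_mul, ofReal_ofNat, ofReal_add, neg_im, mul_im,
    ofReal_re, I_re, I_im, one_mul, ofReal_im, neg_zero, sub_zero, add_im, div_ofReal_re, neg_re,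
    re_ofNat, add_re, im_ofNat, add_zero, div_ofReal_im, zero_sub, neg_add_rev, pow_two, neg_neg]
  field_simp
  linear_combination (-2 * (v.re * w.re + v.im * w.im) * (c.re ^ 2 + c.im ^ 2)) * hc2

theorem omega0_fderiv_probeMap2_I_mul_zero_eq_sq_norm {w c : ℂ} (hw : 2 * ‖w‖ ^ 2 < 1)
    (hc : ‖c‖ = 1) (u : ℂ) (t : ℝ) :
    omega0 (fderiv ℝ probeMap2 (w, c) (u, t * (I * c)))
      (fderiv ℝ probeMap2 (w, c) (I * u, 0)) = ‖u‖ ^ 2 := by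
  have hc2 : c.re ^ 2 + c.im ^ 2 = 1 := by rw [← sq_norm_eq_re_sq_add_im_sq, hc, one_pow]
  rw [fderiv_probeMap2_apply hw, fderiv_probeMap2_apply hw, sq_norm_eq_re_sq_add_im_sq u]
  have hs : √(1 - 2 * ‖w‖ ^ 2) ≠ 0 := Real.sqrt_ne_zero'.2 (by linarith)
  generalize √(1 - 2 * ‖w‖ ^ 2) = s at hs ⊢
  simp only [omega0, Complex.inner, mul_re, conj_re, conj_im, mul_neg, sub_neg_eq_add, neg_mul,
    ofReal_div, ofReal_neg, ofReal_mul, ofReal_ofNat, ofReal_add, map_add, map_mul, map_div₀,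
    map_neg, conj_ofReal, conj_I, I_re, zero_mul, I_im, one_mul, zero_sub, mul_im, zero_add,
    mul_zero, add_zero, add_re, div_ofReal_re, neg_re, re_ofNat, ofReal_re, ofReal_im, sub_zero,
    im_ofNat, neg_zero, add_im, div_ofReal_im, neg_im, zero_div, pow_two, neg_neg, neg_sub,
    neg_add_rev]
  field_simp
  linear_combination s ^ 2 * (2 * (w.re * u.im - u.re * w.im) * t * (c.re ^ 2 + c.im ^ 2)
    + (u.re ^ 2 + u.im ^ 2) * (c.re ^ 2 + c.im ^ 2 + 1)) * hc2

/-- The characteristic distribution of `P₂ = ψ₂(B²(1/√2) × S¹)` is spanned by the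
vector field `∂φ` (the image of the tangent `(0, ic)` to the `S¹`-factor):
`ω₀(∂φ, v) = 0` for every vector `v` tangent to `P₂`, and conversely any tangent
vector `w` of `P₂` which is `ω₀`-orthogonal to all of `TP₂` is a multiple of `∂φ`. -/
theorem probe_characteristic_distribution (w c : ℂ)
    (hw : 2 * ‖w‖ ^ 2 < 1) (hc : ‖c‖ = 1) :
    (∀ (v : ℂ) (t : ℝ),
      omega0 (fderiv ℝ probeMap2 (w, c) (0, I * c))
             (fderiv ℝ probeMap2 (w, c) (v, (t : ℂ) * (I * c))) = 0) ∧
    (∀ (u : ℂ) (t : ℝ),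
      (∀ (v : ℂ) (t' : ℝ),
        omega0 (fderiv ℝ probeMap2 (w, c) (u, (t : ℂ) * (I * c)))
               (fderiv ℝ probeMap2 (w, c) (v, (t' : ℂ) * (I * c))) = 0) →
      ∃ a : ℝ, fderiv ℝ probeMap2 (w, c) (u, (t : ℂ) * (I * c))
        = a • fderiv ℝ probeMap2 (w, c) (0, I * c)) := by
  refine ⟨omega0_fderiv_probeMap2_zero_I_mul_eq_zero hw hc, fun u t hu => ⟨t, ?_⟩⟩
  obtain rfl : u = 0 := by
    have h := hu (I * u) 0
    rwa [ofReal_zero, zero_mul, omega0_fderiv_probeMap2_I_mul_zero_eq_sq_norm hw hc,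
      sq_eq_zero_iff, norm_eq_zero] at h
  rw [← map_smul, Prod.smul_mk, smul_zero, real_smul]
end
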